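/- Let L : H → G be bounded linear with 0 < ‖L‖ ≤ 1 and let B be strictly positive on G. Then L ⊡_γ B → L* ∘ B ∘ L in operator norm as γ → 0⁺, where L ⊡_γ B = L* ∘ (B⁻¹ + γ(Id_G − L L*))⁻¹ ∘ L. -/

import Mathlib

open ContinuousLinearMap MeasureTheory

noncomputable section

variable {E : Type*} [NormedAddCommGroup E] [InnerProductSpace ℝ E] [CompleteSpace E]
variable {H G : Type*} [NormedAddCommGroup H] [InnerProductSpace ℝ H] [CompleteSpace H]
  [NormedAddCommGroup G] [InnerProductSpace ℝ G] [CompleteSpace G]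

/-- Löwner partial order: `A ≼ B` iff `B - A` is a positive operator. -/
def Loewner (A B : E →L[ℝ] E) : Prop := (B - A).IsPositive

/-- Strictly positive operators: `α • Id ≼ A` for some `α > 0`. -/
def StrictlyPos (A : E →L[ℝ] E) : Prop :=
  IsSelfAdjoint A ∧ ∃ α : ℝ, 0 < α ∧ Loewner (α • (1 : E →L[ℝ] E)) A

/-- Bounded below linear operator. -/
def BoundedBelow (L : H →L[ℝ] G) : Prop := ∃ β : ℝ, 0 < β ∧ ∀ x : H, β * ‖x‖ ≤ ‖L x‖

/-- Resolvent cocomposition `L ⊡_γ B = L* ∘ (B⁻¹ + γ(Id − L L*))⁻¹ ∘ L`. -/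
def rcc (L : H →L[ℝ] G) (γ : ℝ) (B : G →L[ℝ] G) : H →L[ℝ] H :=
  (adjoint L) ∘L (Ring.inverse (Ring.inverse B + γ • ((1 : G →L[ℝ] G) - L ∘L adjoint L))) ∘L L

/-- Resolvent composition `L ⊙_γ B = (L ⊡_{1/γ} B⁻¹)⁻¹`. -/
def rc (L : H →L[ℝ] G) (γ : ℝ) (B : G →L[ℝ] G) : H →L[ℝ] H :=
  Ring.inverse (rcc L (1/γ) (Ring.inverse B))

/-- Parallel composition `L* ▸ B = (L* ∘ B⁻¹ ∘ L)⁻¹`. -/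
def parallelComp (L : H →L[ℝ] G) (B : G →L[ℝ] G) : H →L[ℝ] H :=
  Ring.inverse ((adjoint L) ∘L (Ring.inverse B) ∘L L)

/-- `g(A,B) = inf {λ > 0 : A ≼ λ B}`. -/
def gThomp (A B : E →L[ℝ] E) : ℝ := sInf {l : ℝ | 0 < l ∧ Loewner A (l • B)}

/-- Thompson metric. -/
def dThomp (A B : E →L[ℝ] E) : ℝ := Real.log (max (gThomp A B) (gThomp B A))

/-- The (unique) positive square root of a positive operator. -/
def opSqrt (A : E →L[ℝ] E) : E →L[ℝ] E :=
  letI := Classical.propDecidable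
  if h : ∃ S : E →L[ℝ] E, S.IsPositive ∧ S * S = A then h.choose else 0

/-- Real power `A^t` of a strictly positive operator, `t ∈ (0,1)`, via the
Balakrishnan integral formula `A^t = (sin (π t)/π) ∫₀^∞ s^{t-1} A (A + s)⁻¹ ds`. -/
def opRpow (A : E →L[ℝ] E) (t : ℝ) : E →L[ℝ] E :=
  (Real.sin (Real.pi * t) / Real.pi) •
    ∫ s in Set.Ioi (0 : ℝ), s ^ (t - 1) • (A * Ring.inverse (A + s • (1 : E →L[ℝ] E)))

/-- Geometric mean `A # B = A^{1/2} (A^{-1/2} B A^{-1/2})^{1/2} A^{1/2}`. -/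
def geomMean (A B : E →L[ℝ] E) : E →L[ℝ] E :=
  opSqrt A * opSqrt (Ring.inverse (opSqrt A) * B * Ring.inverse (opSqrt A)) * opSqrt A

/-- `t`-weighted geometric mean `A #_t B = A^{1/2} (A^{-1/2} B A^{-1/2})^t A^{1/2}`. -/
def wGeomMean (t : ℝ) (A B : E →L[ℝ] E) : E →L[ℝ] E :=
  opSqrt A * opRpow (Ring.inverse (opSqrt A) * B * Ring.inverse (opSqrt A)) t * opSqrt A

/-! A strictly positive operator is coercive, hence invertible by Lax–Milgram. Writing `B = u` for
a unit `u`, the middle factor of `L ⊡_γ B` is the inverse of `u⁻¹ + γ (Id − L L*)`, which tends to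
`u⁻¹` as `γ → 0`; inversion is continuous at units of a Banach algebra and `T ↦ L* ∘ T ∘ L` is
continuous, so the whole expression tends to `L* ∘ B ∘ L`. -/

open Filter Topology

lemma isCoercive_of_smul_one_loewner {V : Type*} [NormedAddCommGroup V] [InnerProductSpace ℝ V]
    {A : V →L[ℝ] V} {α : ℝ} (hα : 0 < α) (h : Loewner (α • (1 : V →L[ℝ] V)) A) :
    IsCoercive ((innerSL ℝ).comp A) := by
  refine ⟨α, hα, fun u => ?_⟩
  have hu : 0 ≤ inner ℝ ((A - α • (1 : V →L[ℝ] V)) u) u := h.inner_nonneg_left u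
  rw [sub_apply, inner_sub_left, smul_apply, one_apply_eq_self, real_inner_smul_left,
    real_inner_self_eq_norm_mul_norm] at hu
  simp only [coe_comp, Function.comp_apply, innerSL_apply_apply]
  linarith

lemma isUnit_of_isCoercive_innerSL_comp {A : E →L[ℝ] E}
    (h : IsCoercive ((innerSL ℝ).comp A)) : IsUnit A := by
  have hA : (h.continuousLinearEquivOfBilin : E →L[ℝ] E) = A := by
    ext v
    refine ext_inner_right ℝ fun w => ?_
    simp
  exact hA ▸ ⟨ContinuousLinearEquiv.unitsEquiv ℝ E |>.symm h.continuousLinearEquivOfBilin, rfl⟩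

lemma StrictlyPos.isUnit {A : E →L[ℝ] E} (h : StrictlyPos A) : IsUnit A := by
  obtain ⟨-, α, hα, hαA⟩ := h
  exact isUnit_of_isCoercive_innerSL_comp (isCoercive_of_smul_one_loewner hα hαA)

lemma tendsto_inverse_add_smul {𝕜 R : Type*} [NormedField 𝕜] [NormedRing R] [NormedAlgebra 𝕜 R]
    [HasSummableGeomSeries R] (x : Rˣ) (c : R) :
    Tendsto (fun t : 𝕜 => Ring.inverse (↑x + t • c)) (𝓝 0) (𝓝 (Ring.inverse ↑x)) := by
  have hlin : Tendsto (fun t : 𝕜 => (↑x : R) + t • c) (𝓝 0) (𝓝 ↑x) :=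
    (continuous_const.add (continuous_id.smul continuous_const)).tendsto' 0 _ (by simp)
  exact (NormedRing.inverse_continuousAt x).tendsto.comp hlin

theorem rcc_tendsto_comp (L : H →L[ℝ] G)
    (B : G →L[ℝ] G) (hB : StrictlyPos B) :
    Filter.Tendsto (fun γ : ℝ => rcc L γ B) (nhdsWithin 0 (Set.Ioi 0))
      (nhds ((adjoint L) ∘L B ∘L L)) := by
  obtain ⟨u, rfl⟩ := hB.isUnit
  have hinv : Tendsto (fun γ : ℝ => Ring.inverse (Ring.inverse ↑u + γ • (1 - L ∘L adjoint L)))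
      (𝓝[>] (0 : ℝ)) (𝓝 (u : G →L[ℝ] G)) := by
    simpa only [Ring.inverse_unit, inv_inv] using
      (tendsto_inverse_add_smul u⁻¹ (1 - L ∘L adjoint L)).mono_left nhdsWithin_le_nhds
  have hconj : Continuous fun T : G →L[ℝ] G => adjoint L ∘L T ∘L L := by fun_prop
  exact (hconj.tendsto _).comp hinv

end
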